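/- arXiv:2601.03215 — 3 statements merged into one kernel-verified Lean document; each statement's English description precedes it below -/
import Mathlib

section
/- Let k : [0,∞) → [0,∞) be locally integrable, g be L-Lipschitz, and suppose the Volterra equation x(t) + ∫₀ᵗ k(t−s) g(x(s)) ds = f(t) admits a unique solution on [0,T] for every bounded f, with solution map that is C_T-Lipschitz in the sup norm. Let ε > 0 satisfy L ∫₀^ε k(s) ds ≤ 1/2. Then the equation admits a unique solution on [0,T+ε] for every bounded f on [0,T+ε], and the solution map on [0,T+ε] is Lipschitz with constant at most 2(1 + L C_T ∫₀^{T+ε} k(s) ds) + C_T. -/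
/-!
Extending the solution `x₀` from `[0, T]` amounts to finding a fixed point of the map that sets `y`
to `x₀` on `[0, T]` and to `f - ∫₀ᵗ k(t-s) g(y(s)) ds` on `(T, T + ε]`. For two functions `y, z`
equal to `x₀` on `[0, T]` only the integrals over `[T, t]` differ, by at most
`L ∫₀^ε k · sup |y - z| ≤ sup |y - z| / 2`. So the map halves sup distances, and Banach's
fixed-point theorem applies in the class of bounded measurable functions, which is closed under
uniform limits.

For the Lipschitz bound, `C_T` controls `x₁ - x₂` on `[0, T]`, and on `[T, T + ε]` any bound `S`
improves to `M (1 + L C_T ∫₀^{T+ε} k) + S / 2`; applied to the supremum this gives the factor `2`.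
Uniqueness is the case `f₁ = f₂`, `M = 0`.
-/

open MeasureTheory Set

/-- `x` is measurable and bounded on `[0, a]`. -/
def BddMeasOn (x : ℝ → ℝ) (a : ℝ) : Prop :=
  Measurable x ∧ ∃ M : ℝ, ∀ t ∈ Set.Icc (0:ℝ) a, |x t| ≤ M

/-- `x` is a bounded measurable solution on `[0, a]` of the Volterra equation
`x(t) + ∫₀ᵗ k(t-s) g(x(s)) ds = f(t)`. -/
def IsVolterraSol (k g f x : ℝ → ℝ) (a : ℝ) : Prop :=
  BddMeasOn x a ∧ ∀ t ∈ Set.Icc (0:ℝ) a,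
    x t + ∫ s in (0:ℝ)..t, k (t - s) * g (x s) = f t

/-- The solution map on `[0, a]` is `C`-Lipschitz in the sup norm. -/
def SolMapLip (k g : ℝ → ℝ) (a C : ℝ) : Prop :=
  ∀ f₁ f₂ x₁ x₂ : ℝ → ℝ,
    IsVolterraSol k g f₁ x₁ a → IsVolterraSol k g f₂ x₂ a →
    ∀ M : ℝ, (∀ t ∈ Set.Icc (0:ℝ) a, |f₁ t - f₂ t| ≤ M) →
    ∀ t ∈ Set.Icc (0:ℝ) a, |x₁ t - x₂ t| ≤ C * M

open Filter NNReal UniformConvergence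

lemma le_div_one_sub_of_forall_bound {ι : Type*} {u : ι → ℝ} {s : Set ι} {A q : ℝ} (hq : q < 1)
    (hu : BddAbove (u '' s)) (h : ∀ S, (∀ i ∈ s, u i ≤ S) → ∀ i ∈ s, u i ≤ A + q * S) :
    ∀ i ∈ s, u i ≤ A / (1 - q) := by
  intro i hi
  have hle : ∀ j ∈ s, u j ≤ sSup (u '' s) := fun j hj => le_csSup hu (mem_image_of_mem u hj)
  have hsup : sSup (u '' s) ≤ A + q * sSup (u '' s) :=
    csSup_le (nonempty_of_mem (mem_image_of_mem u hi)) (forall_mem_image.2 (h _ hle))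
  rw [le_div_iff₀ (sub_pos.2 hq)]
  nlinarith [hle i hi]

theorem exists_fixedPoint_of_forall_dist_le {α E : Type*} [MetricSpace E] [CompleteSpace E]
    {s : Set (α → E)} {Φ : (α → E) → α → E} {q : ℝ≥0} (hq : q < 1)
    (hs : ∀ (u : ℕ → α → E) (x : α → E), (∀ n, u n ∈ s) → TendstoUniformly u x atTop → x ∈ s)
    (hΦs : MapsTo Φ s s)
    (hΦ : ∀ y ∈ s, ∀ z ∈ s, ∀ S : ℝ, (∀ t, dist (y t) (z t) ≤ S) →
      ∀ t, dist (Φ y t) (Φ z t) ≤ q * S)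
    {y₀ : α → E} (hy₀ : y₀ ∈ s) {S₀ : ℝ} (hS₀ : ∀ t, dist (y₀ t) (Φ y₀ t) ≤ S₀) :
    ∃ x ∈ s, Φ x = x := by
  let F : (α →ᵤ E) → (α →ᵤ E) := fun y => UniformFun.ofFun (Φ (UniformFun.toFun y))
  let s' : Set (α →ᵤ E) := UniformFun.toFun ⁻¹' s
  have hs' : IsComplete s' :=
    (IsSeqClosed.isClosed (s := s') fun u x hu hx =>
      hs _ _ hu (UniformFun.tendsto_iff_tendstoUniformly.1 hx)).isComplete
  have hF : MapsTo F s' s' := fun y hy => hΦs hy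
  have hcontr : ContractingWith (max q 2⁻¹) (hF.restrict F s' s') := by
    -- `max q 2⁻¹` rather than `q`: for `q = 0`, `q * edist y z` would vanish at distance `⊤`.
    refine ⟨max_lt hq (by norm_num), fun y z => ?_⟩
    show edist (F y) (F z) ≤ _ * edist (y : α →ᵤ E) z
    rcases eq_top_or_lt_top (edist (y : α →ᵤ E) z) with h | h
    · simp [h]
    have hyz : ∀ t, dist (UniformFun.toFun (y : α →ᵤ E) t) (UniformFun.toFun (z : α →ᵤ E) t)
        ≤ (edist (y : α →ᵤ E) z).toReal := fun t => by
      rw [dist_edist]; exact ENNReal.toReal_mono h.ne UniformFun.edist_eval_le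
    refine UniformFun.edist_le.2 fun t => ?_
    rw [edist_dist, ← ENNReal.ofReal_toReal h.ne, ← ENNReal.ofReal_coe_nnreal,
      ← ENNReal.ofReal_mul (by positivity)]
    exact ENNReal.ofReal_le_ofReal ((hΦ _ y.2 _ z.2 _ hyz t).trans
      (mul_le_mul_of_nonneg_right (by exact_mod_cast le_max_left q 2⁻¹) ENNReal.toReal_nonneg))
  have hy₀F : edist (UniformFun.ofFun y₀) (F (UniformFun.ofFun y₀)) ≠ ⊤ :=
    ne_top_of_le_ne_top ENNReal.ofReal_ne_top (UniformFun.edist_le.2 fun t => by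
      rw [edist_dist]; exact ENNReal.ofReal_le_ofReal (hS₀ t))
  obtain ⟨x, hx, hfix, -⟩ := hcontr.exists_fixedPoint' hs' hF hy₀ hy₀F
  exact ⟨UniformFun.toFun x, hx, congrArg UniformFun.toFun hfix⟩

section Kernel

variable {k : ℝ → ℝ}

lemma intervalIntegrable_of_locallyIntegrableOn_Ici (hk : LocallyIntegrableOn k (Ici 0))
    {a b : ℝ} (ha : 0 ≤ a) (hb : 0 ≤ b) : IntervalIntegrable k volume a b :=
  (hk.integrableOn_compact_subset (fun _ hx => le_trans (le_min ha hb) hx.1)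
    isCompact_uIcc).intervalIntegrable

lemma integral_mono_interval_of_nonneg (hk0 : ∀ t, 0 ≤ t → 0 ≤ k t)
    (hk : LocallyIntegrableOn k (Ici 0)) {a b c d : ℝ} (hc : 0 ≤ c) (hca : c ≤ a) (hab : a ≤ b)
    (hbd : b ≤ d) : ∫ u in a..b, k u ≤ ∫ u in c..d, k u :=
  intervalIntegral.integral_mono_interval hca hab hbd
    ((ae_restrict_iff' measurableSet_Ioc).2 (.of_forall fun u hu => hk0 u (hc.trans hu.1.le)))
    (intervalIntegrable_of_locallyIntegrableOn_Ici hk hc (hc.trans (hca.trans (hab.trans hbd))))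

lemma intervalIntegrable_kernel (hk : LocallyIntegrableOn k (Ici 0)) {a b t : ℝ} (ha : a ≤ t)
    (hb : b ≤ t) : IntervalIntegrable (fun s => k (t - s)) volume a b := by
  simpa using (intervalIntegrable_of_locallyIntegrableOn_Ici hk (sub_nonneg.2 ha)
    (sub_nonneg.2 hb)).comp_sub_left t

lemma intervalIntegrable_kernel_mul (hk : LocallyIntegrableOn k (Ici 0)) {w : ℝ → ℝ}
    (hw : Measurable w) {a b t C : ℝ} (hab : a ≤ b) (hbt : b ≤ t)
    (hwC : ∀ s ∈ Ioc a b, |w s| ≤ C) :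
    IntervalIntegrable (fun s => k (t - s) * w s) volume a b := by
  rw [intervalIntegrable_iff_integrableOn_Ioc_of_le hab]
  exact ((intervalIntegrable_kernel hk (hab.trans hbt) hbt).1).mul_bdd hw.aestronglyMeasurable
    ((ae_restrict_iff' measurableSet_Ioc).2 (.of_forall hwC))

lemma abs_integral_kernel_mul_le (hk0 : ∀ t, 0 ≤ t → 0 ≤ k t)
    (hk : LocallyIntegrableOn k (Ici 0)) {w : ℝ → ℝ} {a b t C : ℝ} (hab : a ≤ b) (hbt : b ≤ t)
    (hw : ∀ s ∈ Ioc a b, |w s| ≤ C) :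
    |∫ s in a..b, k (t - s) * w s| ≤ C * ∫ u in (t - b)..(t - a), k u := by
  calc |∫ s in a..b, k (t - s) * w s|
      ≤ ∫ s in a..b, C * k (t - s) := by
        rw [← Real.norm_eq_abs]
        refine intervalIntegral.norm_integral_le_of_norm_le hab (.of_forall fun s hs => ?_)
          ((intervalIntegrable_kernel hk (hab.trans hbt) hbt).const_mul C)
        rw [Real.norm_eq_abs, abs_mul, abs_of_nonneg (hk0 _ (by linarith [hs.2])), mul_comm]
        exact mul_le_mul_of_nonneg_right (hw s hs) (hk0 _ (by linarith [hs.2]))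
    _ = C * ∫ u in (t - b)..(t - a), k u := by
        rw [intervalIntegral.integral_const_mul, intervalIntegral.integral_comp_sub_left]

end Kernel

noncomputable def volterraIntegral (k g y : ℝ → ℝ) (t : ℝ) : ℝ :=
  ∫ s in (0:ℝ)..t, k (t - s) * g (y s)

section Volterra

variable {k g : ℝ → ℝ} {K : ℝ≥0}

lemma LipschitzWith.abs_sub_le (hg : LipschitzWith K g) (a b : ℝ) :
    |g a - g b| ≤ K * |a - b| := by
  simpa only [Real.dist_eq] using hg.dist_le_mul a b

lemma LipschitzWith.abs_le_add_mul (hg : LipschitzWith K g) {a B : ℝ} (ha : |a| ≤ B) :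
    |g a| ≤ |g 0| + K * B :=
  calc |g a| ≤ |g 0| + |g a - g 0| := by linarith [abs_sub_abs_le_abs_sub (g a) (g 0)]
    _ ≤ |g 0| + K * |a - 0| := by gcongr; exact hg.abs_sub_le a 0
    _ ≤ |g 0| + K * B := by rw [sub_zero]; gcongr

lemma intervalIntegrable_volterra_integrand (hk : LocallyIntegrableOn k (Ici 0))
    (hg : LipschitzWith K g) {y : ℝ → ℝ} (hy : Measurable y) {t B : ℝ} (ht : 0 ≤ t)
    (hyB : ∀ s ∈ Icc 0 t, |y s| ≤ B) :
    IntervalIntegrable (fun s => k (t - s) * g (y s)) volume 0 t := by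
  refine intervalIntegrable_kernel_mul hk (hg.continuous.measurable.comp hy) ht le_rfl
    fun s hs => hg.abs_le_add_mul (hyB s (Ioc_subset_Icc_self hs))

lemma volterraIntegral_congr {y z : ℝ → ℝ} {t : ℝ} (ht : 0 ≤ t) (h : EqOn y z (Icc 0 t)) :
    volterraIntegral k g y t = volterraIntegral k g z t :=
  intervalIntegral.integral_congr fun s hs => by
    rw [uIcc_of_le ht] at hs
    simp only [h hs]

lemma abs_volterraIntegral_le (hk0 : ∀ t, 0 ≤ t → 0 ≤ k t) (hk : LocallyIntegrableOn k (Ici 0))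
    (hg : LipschitzWith K g) {y : ℝ → ℝ} {t B : ℝ} (ht : 0 ≤ t)
    (hyB : ∀ s ∈ Icc 0 t, |y s| ≤ B) :
    |volterraIntegral k g y t| ≤ (|g 0| + K * B) * ∫ u in (0:ℝ)..t, k u := by
  have := abs_integral_kernel_mul_le hk0 hk ht le_rfl (w := fun s => g (y s))
    fun s hs => hg.abs_le_add_mul (hyB s (Ioc_subset_Icc_self hs))
  rwa [sub_self, sub_zero] at this

lemma abs_volterraIntegral_sub_le_split (hk0 : ∀ t, 0 ≤ t → 0 ≤ k t)
    (hk : LocallyIntegrableOn k (Ici 0)) (hg : LipschitzWith K g) {y z : ℝ → ℝ}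
    (hy : Measurable y) (hz : Measurable z) {T t B B' C S : ℝ} (hT : 0 ≤ T) (hTt : T ≤ t)
    (hyB : ∀ s ∈ Icc 0 t, |y s| ≤ B) (hzB : ∀ s ∈ Icc 0 t, |z s| ≤ B')
    (h₁ : ∀ s ∈ Icc 0 T, |y s - z s| ≤ C) (h₂ : ∀ s ∈ Icc T t, |y s - z s| ≤ S) :
    |volterraIntegral k g y t - volterraIntegral k g z t|
      ≤ K * C * (∫ u in (t - T)..t, k u) + K * S * ∫ u in (0:ℝ)..(t - T), k u := by
  have ht : 0 ≤ t := hT.trans hTt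
  set w : ℝ → ℝ := fun s => g (y s) - g (z s)
  have hw : Measurable w :=
    (hg.continuous.measurable.comp hy).sub (hg.continuous.measurable.comp hz)
  have hwC : ∀ s ∈ Ioc 0 T, |w s| ≤ K * C := fun s hs =>
    (hg.abs_sub_le _ _).trans
      (mul_le_mul_of_nonneg_left (h₁ s (Ioc_subset_Icc_self hs)) K.coe_nonneg)
  have hwS : ∀ s ∈ Ioc T t, |w s| ≤ K * S := fun s hs =>
    (hg.abs_sub_le _ _).trans
      (mul_le_mul_of_nonneg_left (h₂ s (Ioc_subset_Icc_self hs)) K.coe_nonneg)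
  have hsplit : volterraIntegral k g y t - volterraIntegral k g z t
      = (∫ s in (0:ℝ)..T, k (t - s) * w s) + ∫ s in T..t, k (t - s) * w s := by
    rw [intervalIntegral.integral_add_adjacent_intervals
      (intervalIntegrable_kernel_mul hk hw hT hTt hwC)
      (intervalIntegrable_kernel_mul hk hw hTt le_rfl hwS), volterraIntegral, volterraIntegral,
      ← intervalIntegral.integral_sub
        (intervalIntegrable_volterra_integrand hk hg hy ht hyB)
        (intervalIntegrable_volterra_integrand hk hg hz ht hzB)]
    simp only [w, mul_sub]
  calc |volterraIntegral k g y t - volterraIntegral k g z t|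
      ≤ |∫ s in (0:ℝ)..T, k (t - s) * w s| + |∫ s in T..t, k (t - s) * w s| := by
        rw [hsplit]; exact abs_add_le _ _
    _ ≤ K * C * (∫ u in (t - T)..(t - 0), k u) + K * S * ∫ u in (t - t)..(t - T), k u :=
        add_le_add (abs_integral_kernel_mul_le hk0 hk hT hTt hwC)
          (abs_integral_kernel_mul_le hk0 hk hTt le_rfl hwS)
    _ = K * C * (∫ u in (t - T)..t, k u) + K * S * ∫ u in (0:ℝ)..(t - T), k u := by
        rw [sub_zero, sub_self]

lemma abs_volterraIntegral_sub_le (hk0 : ∀ t, 0 ≤ t → 0 ≤ k t)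
    (hk : LocallyIntegrableOn k (Ici 0)) (hg : LipschitzWith K g) {y z : ℝ → ℝ}
    (hy : Measurable y) (hz : Measurable z) {T ε t B B' C S : ℝ} (hT : 0 ≤ T) (hTt : T ≤ t)
    (htε : t ≤ T + ε) (hyB : ∀ s ∈ Icc 0 t, |y s| ≤ B) (hzB : ∀ s ∈ Icc 0 t, |z s| ≤ B')
    (h₁ : ∀ s ∈ Icc 0 T, |y s - z s| ≤ C) (h₂ : ∀ s ∈ Icc T t, |y s - z s| ≤ S) :
    |volterraIntegral k g y t - volterraIntegral k g z t|
      ≤ K * C * (∫ u in (0:ℝ)..(T + ε), k u) + K * S * ∫ u in (0:ℝ)..ε, k u := by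
  have hC : 0 ≤ C := (abs_nonneg _).trans (h₁ 0 ⟨le_rfl, hT⟩)
  have hS : 0 ≤ S := (abs_nonneg _).trans (h₂ T ⟨le_rfl, hTt⟩)
  refine (abs_volterraIntegral_sub_le_split hk0 hk hg hy hz hT hTt hyB hzB h₁ h₂).trans ?_
  gcongr
  · exact integral_mono_interval_of_nonneg hk0 hk le_rfl (by linarith) (by linarith) htε
  · exact integral_mono_interval_of_nonneg hk0 hk le_rfl le_rfl (by linarith) (by linarith)

lemma exists_measurable_eqOn_volterraIntegral {y : ℝ → ℝ}
    (hk : LocallyIntegrableOn k (Ici 0)) (hg : Measurable g) (hy : Measurable y) :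
    ∃ F : ℝ → ℝ, Measurable F ∧ EqOn F (volterraIntegral k g y) (Ici 0) := by
  -- `k` need not be measurable; only its values on `[0, ∞)`, where `t - s` lives, matter.
  obtain ⟨k', hk', hkk'⟩ : ∃ k', StronglyMeasurable k' ∧ ∀ᵐ u, u ∈ Ici (0:ℝ) → k u = k' u :=
    let h := hk.aestronglyMeasurable
    ⟨h.mk k, h.stronglyMeasurable_mk, (ae_restrict_iff' measurableSet_Ici).1 h.ae_eq_mk⟩
  let G : ℝ × ℝ → ℝ :=
    {p | 0 < p.2 ∧ p.2 ≤ p.1}.indicator fun p => k' (p.1 - p.2) * g (y p.2)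
  have hG : StronglyMeasurable G :=
    (((hk'.measurable.comp (measurable_fst.sub measurable_snd)).mul
      ((hg.comp hy).comp measurable_snd)).indicator
      ((measurableSet_lt measurable_const measurable_snd).inter
        (measurableSet_le measurable_snd measurable_fst))).stronglyMeasurable
  refine ⟨fun t => ∫ s, G (t, s), hG.integral_prod_right'.measurable, fun t ht => ?_⟩
  have hkk't : ∀ᵐ s, t - s ∈ Ici (0:ℝ) → k (t - s) = k' (t - s) :=
    (Measure.measurePreserving_sub_left volume t).quasiMeasurePreserving.ae hkk'
  rw [volterraIntegral, intervalIntegral.integral_of_le ht,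
    ← integral_indicator measurableSet_Ioc]
  refine integral_congr_ae ?_
  filter_upwards [hkk't] with s hs
  by_cases hs' : s ∈ Ioc 0 t
  · rw [indicator_of_mem hs', hs (sub_nonneg.2 hs'.2)]
    exact indicator_of_mem (s := {p : ℝ × ℝ | 0 < p.2 ∧ p.2 ≤ p.1}) (a := (t, s)) hs' _
  · rw [indicator_of_notMem hs']
    exact indicator_of_notMem (s := {p : ℝ × ℝ | 0 < p.2 ∧ p.2 ≤ p.1}) (a := (t, s)) hs' _

lemma BddMeasOn.mono {x : ℝ → ℝ} {a b : ℝ} (h : BddMeasOn x a) (hba : b ≤ a) : BddMeasOn x b :=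
  let ⟨hm, B, hB⟩ := h
  ⟨hm, B, fun t ht => hB t ⟨ht.1, ht.2.trans hba⟩⟩

lemma IsVolterraSol.mono {f x : ℝ → ℝ} {a b : ℝ} (h : IsVolterraSol k g f x a) (hba : b ≤ a) :
    IsVolterraSol k g f x b :=
  ⟨h.1.mono hba, fun t ht => h.2 t ⟨ht.1, ht.2.trans hba⟩⟩

theorem SolMapLip.extend (hk0 : ∀ t, 0 ≤ t → 0 ≤ k t) (hk : LocallyIntegrableOn k (Ici 0))
    (hg : LipschitzWith K g) {T ε C : ℝ} (hT : 0 ≤ T) (hε : 0 ≤ ε) (hC : 0 ≤ C)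
    (hlip : SolMapLip k g T C) (hsmall : K * ∫ s in (0:ℝ)..ε, k s ≤ 1 / 2) :
    SolMapLip k g (T + ε) (2 * (1 + K * C * ∫ s in (0:ℝ)..(T + ε), k s) + C) := by
  intro f₁ f₂ x₁ x₂ h₁ h₂ M hM t ht
  have hM0 : 0 ≤ M := (abs_nonneg _).trans (hM 0 ⟨le_rfl, ht.1.trans ht.2⟩)
  have hhead : ∀ s ∈ Icc 0 T, |x₁ s - x₂ s| ≤ C * M :=
    hlip f₁ f₂ x₁ x₂ (h₁.mono (by linarith)) (h₂.mono (by linarith)) M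
      fun s hs => hM s ⟨hs.1, by linarith [hs.2]⟩
  obtain ⟨⟨hx₁, B₁, hB₁⟩, heq₁⟩ := h₁
  obtain ⟨⟨hx₂, B₂, hB₂⟩, heq₂⟩ := h₂
  have htail : ∀ s ∈ Icc T (T + ε), |x₁ s - x₂ s|
      ≤ M * (1 + K * C * ∫ s in (0:ℝ)..(T + ε), k s) / (1 - 1 / 2) := by
    refine le_div_one_sub_of_forall_bound (by norm_num) ⟨B₁ + B₂, ?_⟩ fun S hS s hs => ?_
    · exact forall_mem_image.2 fun s hs => (abs_sub _ _).trans
        (add_le_add (hB₁ s ⟨hT.trans hs.1, hs.2⟩) (hB₂ s ⟨hT.trans hs.1, hs.2⟩))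
    have hs₀ : s ∈ Icc 0 (T + ε) := ⟨hT.trans hs.1, hs.2⟩
    have e₁ : x₁ s + volterraIntegral k g x₁ s = f₁ s := heq₁ s hs₀
    have e₂ : x₂ s + volterraIntegral k g x₂ s = f₂ s := heq₂ s hs₀
    have hV := abs_volterraIntegral_sub_le hk0 hk hg hx₁ hx₂ hT hs.1 hs.2
      (fun r hr => hB₁ r ⟨hr.1, hr.2.trans hs.2⟩) (fun r hr => hB₂ r ⟨hr.1, hr.2.trans hs.2⟩)
      hhead fun r hr => hS r ⟨hr.1, hr.2.trans hs.2⟩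
    have hS₀ : 0 ≤ S := (abs_nonneg _).trans (hS T ⟨le_rfl, by linarith⟩)
    calc |x₁ s - x₂ s|
        = |(f₁ s - f₂ s) - (volterraIntegral k g x₁ s - volterraIntegral k g x₂ s)| := by
          rw [← e₁, ← e₂]; ring_nf
      _ ≤ M + (K * (C * M) * (∫ u in (0:ℝ)..(T + ε), k u) + K * S * ∫ u in (0:ℝ)..ε, k u) :=
          (abs_sub _ _).trans (add_le_add (hM s hs₀) hV)
      _ ≤ _ := by nlinarith [mul_le_mul_of_nonneg_right hsmall hS₀]
  have hKI : 0 ≤ K * C * ∫ s in (0:ℝ)..(T + ε), k s :=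
    mul_nonneg (by positivity) (intervalIntegral.integral_nonneg (ht.1.trans ht.2)
      fun u hu => hk0 u hu.1)
  rcases le_or_gt t T with htT | hTt
  · calc |x₁ t - x₂ t| ≤ C * M := hhead t ⟨ht.1, htT⟩
      _ ≤ _ := by nlinarith
  · calc |x₁ t - x₂ t| ≤ _ := htail t ⟨hTt.le, ht.2⟩
      _ = 2 * (1 + K * C * ∫ s in (0:ℝ)..(T + ε), k s) * M := by ring
      _ ≤ _ := by nlinarith [mul_nonneg hC hM0]

-- Zero outside `[0, I]`, so that the iterates stay bounded.
noncomputable def volterraStep (k g f x₀ : ℝ → ℝ) (T I : ℝ) (y : ℝ → ℝ) : ℝ → ℝ :=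
  (Icc 0 T).piecewise x₀ ((Ioc T I).piecewise (fun t => f t - volterraIntegral k g y t) 0)

def bddMeasExtensions (x₀ : ℝ → ℝ) (T : ℝ) : Set (ℝ → ℝ) :=
  {y | Measurable y ∧ (∃ B, ∀ t, |y t| ≤ B) ∧ EqOn y x₀ (Icc 0 T)}

lemma mem_bddMeasExtensions_of_tendstoUniformly {x₀ : ℝ → ℝ} {T : ℝ} {u : ℕ → ℝ → ℝ}
    {x : ℝ → ℝ} (hu : ∀ n, u n ∈ bddMeasExtensions x₀ T) (hux : TendstoUniformly u x atTop) :
    x ∈ bddMeasExtensions x₀ T := by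
  refine ⟨measurable_of_tendsto_metrizable (fun n => (hu n).1)
    (tendsto_pi_nhds.2 hux.tendsto_at), ?_, fun t ht => ?_⟩
  · obtain ⟨n, hn⟩ := (Metric.tendstoUniformly_iff.1 hux 1 one_pos).exists
    obtain ⟨B, hB⟩ := (hu n).2.1
    refine ⟨B + 1, fun t => ?_⟩
    have := abs_sub_abs_le_abs_sub (x t) (u n t)
    have := hn t
    rw [Real.dist_eq] at this
    linarith [hB t]
  · exact tendsto_nhds_unique (hux.tendsto_at t)
      (tendsto_const_nhds.congr fun n => ((hu n).2.2 ht).symm)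

lemma indicator_mem_bddMeasExtensions {x₀ : ℝ → ℝ} {T : ℝ} (hT : 0 ≤ T)
    (hx₀ : BddMeasOn x₀ T) : (Icc 0 T).indicator x₀ ∈ bddMeasExtensions x₀ T := by
  obtain ⟨hx₀m, B, hB⟩ := hx₀
  refine ⟨hx₀m.indicator measurableSet_Icc, ⟨B, fun t => ?_⟩, fun t ht => indicator_of_mem ht _⟩
  by_cases ht : t ∈ Icc 0 T
  · rw [indicator_of_mem ht]
    exact hB t ht
  · rw [indicator_of_notMem ht, abs_zero]
    exact (abs_nonneg _).trans (hB 0 ⟨le_rfl, hT⟩)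

lemma measurable_volterraStep (hk : LocallyIntegrableOn k (Ici 0)) (hg : Measurable g)
    {f x₀ y : ℝ → ℝ} {T I : ℝ} (hT : 0 ≤ T) (hf : Measurable f) (hx₀ : Measurable x₀)
    (hy : Measurable y) : Measurable (volterraStep k g f x₀ T I y) := by
  obtain ⟨F, hFm, hF⟩ := exists_measurable_eqOn_volterraIntegral hk hg hy
  have hstep : volterraStep k g f x₀ T I y
      = (Icc 0 T).piecewise x₀ ((Ioc T I).piecewise (fun t => f t - F t) 0) := by
    unfold volterraStep
    congr 1
    ext t
    by_cases ht : t ∈ Ioc T I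
    · simp only [piecewise_eq_of_mem _ _ _ ht, hF (hT.trans ht.1.le)]
    · simp only [piecewise_eq_of_notMem _ _ _ ht]
  rw [hstep]
  exact hx₀.piecewise measurableSet_Icc ((hf.sub hFm).piecewise measurableSet_Ioc measurable_const)

lemma volterraStep_mem_bddMeasExtensions (hk0 : ∀ t, 0 ≤ t → 0 ≤ k t)
    (hk : LocallyIntegrableOn k (Ici 0)) (hg : LipschitzWith K g) {f x₀ y : ℝ → ℝ} {T I : ℝ}
    (hT : 0 ≤ T) (hTI : T ≤ I) (hf : BddMeasOn f I) (hx₀ : BddMeasOn x₀ T)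
    (hy : y ∈ bddMeasExtensions x₀ T) :
    volterraStep k g f x₀ T I y ∈ bddMeasExtensions x₀ T := by
  obtain ⟨hfm, Bf, hBf⟩ := hf
  obtain ⟨hx₀m, B₀, hB₀⟩ := hx₀
  obtain ⟨hym, ⟨B, hB⟩, -⟩ := hy
  refine ⟨measurable_volterraStep hk hg.continuous.measurable hT hfm hx₀m hym,
    ⟨B₀ + (Bf + (|g 0| + K * B) * ∫ u in (0:ℝ)..I, k u), fun t => ?_⟩,
    fun t ht => piecewise_eq_of_mem _ _ _ ht⟩
  have hB₀0 : 0 ≤ B₀ := (abs_nonneg _).trans (hB₀ 0 ⟨le_rfl, hT⟩)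
  have hBf0 : 0 ≤ Bf := (abs_nonneg _).trans (hBf 0 ⟨le_rfl, hT.trans hTI⟩)
  have hC : 0 ≤ |g 0| + K * B :=
    add_nonneg (abs_nonneg _) (mul_nonneg K.coe_nonneg ((abs_nonneg _).trans (hB 0)))
  have hkI : 0 ≤ ∫ u in (0:ℝ)..I, k u :=
    intervalIntegral.integral_nonneg (hT.trans hTI) fun u hu => hk0 u hu.1
  have := mul_nonneg hC hkI
  unfold volterraStep
  by_cases ht₁ : t ∈ Icc 0 T
  · rw [piecewise_eq_of_mem _ _ _ ht₁]
    linarith [hB₀ t ht₁]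
  rw [piecewise_eq_of_notMem _ _ _ ht₁]
  by_cases ht₂ : t ∈ Ioc T I
  · have h0t : 0 ≤ t := hT.trans ht₂.1.le
    rw [piecewise_eq_of_mem _ _ _ ht₂]
    calc |f t - volterraIntegral k g y t| ≤ |f t| + |volterraIntegral k g y t| := abs_sub _ _
      _ ≤ Bf + (|g 0| + K * B) * ∫ u in (0:ℝ)..I, k u :=
          add_le_add (hBf t ⟨h0t, ht₂.2⟩) ((abs_volterraIntegral_le hk0 hk hg h0t fun s _ => hB s).trans
            (mul_le_mul_of_nonneg_left
              (integral_mono_interval_of_nonneg hk0 hk le_rfl le_rfl h0t ht₂.2) hC))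
      _ ≤ _ := by linarith
  · rw [piecewise_eq_of_notMem _ _ _ ht₂, Pi.zero_apply, abs_zero]
    linarith

lemma abs_volterraStep_sub_le (hk0 : ∀ t, 0 ≤ t → 0 ≤ k t)
    (hk : LocallyIntegrableOn k (Ici 0)) (hg : LipschitzWith K g) {f x₀ y z : ℝ → ℝ}
    {T ε S : ℝ} (hT : 0 ≤ T) (hsmall : K * ∫ s in (0:ℝ)..ε, k s ≤ 1 / 2)
    (hy : y ∈ bddMeasExtensions x₀ T) (hz : z ∈ bddMeasExtensions x₀ T)
    (hyz : ∀ t, |y t - z t| ≤ S) (t : ℝ) :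
    |volterraStep k g f x₀ T (T + ε) y t - volterraStep k g f x₀ T (T + ε) z t| ≤ 2⁻¹ * S := by
  obtain ⟨hym, ⟨By, hBy⟩, hyx₀⟩ := hy
  obtain ⟨hzm, ⟨Bz, hBz⟩, hzx₀⟩ := hz
  have hS : 0 ≤ S := (abs_nonneg _).trans (hyz 0)
  unfold volterraStep
  by_cases ht₁ : t ∈ Icc 0 T
  · rw [piecewise_eq_of_mem _ _ _ ht₁, piecewise_eq_of_mem _ _ _ ht₁, sub_self, abs_zero]
    positivity
  rw [piecewise_eq_of_notMem _ _ _ ht₁, piecewise_eq_of_notMem _ _ _ ht₁]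
  by_cases ht₂ : t ∈ Ioc T (T + ε)
  · rw [piecewise_eq_of_mem _ _ _ ht₂, piecewise_eq_of_mem _ _ _ ht₂]
    have hV := abs_volterraIntegral_sub_le hk0 hk hg hzm hym hT ht₂.1.le ht₂.2
      (fun s _ => hBz s) (fun s _ => hBy s) (C := 0)
      (fun s hs => by rw [hzx₀ hs, hyx₀ hs, sub_self, abs_zero])
      (fun s _ => by rw [abs_sub_comm]; exact hyz s)
    calc |f t - volterraIntegral k g y t - (f t - volterraIntegral k g z t)|
        = |volterraIntegral k g z t - volterraIntegral k g y t| := by ring_nf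
      _ ≤ K * 0 * (∫ u in (0:ℝ)..(T + ε), k u) + K * S * ∫ u in (0:ℝ)..ε, k u := hV
      _ ≤ 2⁻¹ * S := by nlinarith [mul_le_mul_of_nonneg_right hsmall hS]
  · rw [piecewise_eq_of_notMem _ _ _ ht₂, piecewise_eq_of_notMem _ _ _ ht₂, sub_self, abs_zero]
    positivity

lemma isVolterraSol_of_volterraStep_eq {f x₀ x : ℝ → ℝ} {T I : ℝ}
    (hx₀ : IsVolterraSol k g f x₀ T) (hx : x ∈ bddMeasExtensions x₀ T)
    (hfix : volterraStep k g f x₀ T I x = x) : IsVolterraSol k g f x I := by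
  obtain ⟨hxm, ⟨B, hB⟩, hxx₀⟩ := hx
  refine ⟨⟨hxm, B, fun t _ => hB t⟩, fun t ht => ?_⟩
  show x t + volterraIntegral k g x t = f t
  rcases le_or_gt t T with htT | hTt
  · rw [hxx₀ ⟨ht.1, htT⟩, volterraIntegral_congr ht.1 fun s hs => hxx₀ ⟨hs.1, hs.2.trans htT⟩]
    exact hx₀.2 t ⟨ht.1, htT⟩
  · have := congrFun hfix t
    rw [volterraStep, piecewise_eq_of_notMem _ _ _ fun h => hTt.not_ge h.2,
      piecewise_eq_of_mem _ _ _ (show t ∈ Ioc T I from ⟨hTt, ht.2⟩)] at this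
    linarith

theorem IsVolterraSol.exists_extend (hk0 : ∀ t, 0 ≤ t → 0 ≤ k t)
    (hk : LocallyIntegrableOn k (Ici 0)) (hg : LipschitzWith K g) {T ε : ℝ} (hT : 0 ≤ T)
    (hε : 0 ≤ ε) (hsmall : K * ∫ s in (0:ℝ)..ε, k s ≤ 1 / 2) {f x₀ : ℝ → ℝ}
    (hf : BddMeasOn f (T + ε)) (hx₀ : IsVolterraSol k g f x₀ T) :
    ∃ x, IsVolterraSol k g f x (T + ε) := by
  have hmaps : MapsTo (volterraStep k g f x₀ T (T + ε)) (bddMeasExtensions x₀ T)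
      (bddMeasExtensions x₀ T) := fun y hy =>
    volterraStep_mem_bddMeasExtensions hk0 hk hg hT (by linarith) hf hx₀.1 hy
  have hy₀ := indicator_mem_bddMeasExtensions hT hx₀.1
  obtain ⟨B₀, hB₀⟩ := hy₀.2.1
  obtain ⟨B₁, hB₁⟩ := (hmaps hy₀).2.1
  obtain ⟨x, hx, hfix⟩ := exists_fixedPoint_of_forall_dist_le (q := 2⁻¹) (by norm_num)
    (fun u x hu hux => mem_bddMeasExtensions_of_tendstoUniformly hu hux) hmaps
    (fun y hy z hz S hyz t => by
      simpa [Real.dist_eq] using abs_volterraStep_sub_le hk0 hk hg hT hsmall hy hz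
        (fun t => by simpa [Real.dist_eq] using hyz t) t)
    hy₀ (S₀ := B₀ + B₁) fun t => by
      rw [Real.dist_eq]; exact (abs_sub _ _).trans (add_le_add (hB₀ t) (hB₁ t))
  exact ⟨x, isVolterraSol_of_volterraStep_eq hx₀ hx hfix⟩

end Volterra

theorem stmt2 (k g : ℝ → ℝ) (L T ε C_T : ℝ) (hL : 0 < L) (hT : 0 < T) (hε : 0 < ε)
    (hCT : 0 < C_T)
    (hk_nonneg : ∀ t, 0 ≤ t → 0 ≤ k t)
    (hk_loc : LocallyIntegrableOn k (Set.Ici 0))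
    (hg : LipschitzWith (Real.toNNReal L) g)
    -- existence and uniqueness on [0, T] for every bounded measurable f
    (hex : ∀ f : ℝ → ℝ, BddMeasOn f T →
      ∃ x : ℝ → ℝ, IsVolterraSol k g f x T ∧
        ∀ y : ℝ → ℝ, IsVolterraSol k g f y T → ∀ t ∈ Set.Icc (0:ℝ) T, y t = x t)
    -- the solution map on [0, T] is C_T-Lipschitz in the sup norm
    (hlip : SolMapLip k g T C_T)
    -- smallness of ε
    (hint : L * ∫ s in (0:ℝ)..ε, k s ≤ 1 / 2) :
    -- existence and uniqueness on [0, T + ε], and Lipschitz dependence with the explicit constant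
    (∀ f : ℝ → ℝ, BddMeasOn f (T + ε) →
      ∃ x : ℝ → ℝ, IsVolterraSol k g f x (T + ε) ∧
        ∀ y : ℝ → ℝ, IsVolterraSol k g f y (T + ε) →
          ∀ t ∈ Set.Icc (0:ℝ) (T + ε), y t = x t) ∧
    SolMapLip k g (T + ε) (2 * (1 + L * C_T * ∫ s in (0:ℝ)..(T + ε), k s) + C_T) := by
  lift L to ℝ≥0 using hL.le
  rw [Real.toNNReal_coe] at hg
  have hlipε := hlip.extend hk_nonneg hk_loc hg hT.le hε.le hCT.le hint
  refine ⟨fun f hf => ?_, hlipε⟩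
  obtain ⟨x₀, hx₀, -⟩ := hex f (hf.mono (by linarith))
  obtain ⟨x, hx⟩ := hx₀.exists_extend hk_nonneg hk_loc hg hT.le hε.le hint hf
  refine ⟨x, hx, fun y hy t ht => ?_⟩
  have hyx := hlipε f f y x hy hx 0 (fun s _ => by rw [sub_self, abs_zero]) t ht
  rwa [mul_zero, abs_nonpos_iff, sub_eq_zero] at hyx
end

section
/- Let G : (0,∞) → [0,∞) be completely monotone and square-integrable on [0,T], with Bernstein representation G(t) = ∫₀^∞ e^{−λt} μ(dλ) for a finite measure μ. Let 𝐆 be the convolution operator with kernel G on L²([0,T]), and 𝐇 the operator (𝐇v)(t) = κ_∞ ∫₀ᵗ v(s) ds with κ_∞ ≥ 0. Then ⟨𝐇v, 𝐆v⟩ ≥ 0 for every v ∈ L²([0,T]). -/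
/-!
Write `V = ∫₀ᵗ v` and `W_λ = ∫₀ᵗ e^{-λ(t-s)} v(s) ds`. By the Bernstein representation and
Fubini, `⟨𝐇v, 𝐆v⟩ = κ ∫ ⟨V, W_λ⟩ μ(dλ)`, so it suffices that `⟨V, W_λ⟩ ≥ 0` for every `λ ≥ 0`.
Exchanging the order of integration over the triangle `0 < s ≤ u ≤ t` gives `V = W_λ + λ U_λ`
with `U_λ = ∫₀ᵗ W_λ`; since `U_λ' = W_λ`, this yields
`⟨V, W_λ⟩ = ∫₀ᵀ W_λ² + λ U_λ(T)² / 2 ≥ 0`.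
-/

open MeasureTheory Set Real

theorem Set.Ioc_inter_Ici_of_mem {α : Type*} [Preorder α] {a b c : α} (hc : c ∈ Ioc a b) :
    Ioc a b ∩ Ici c = Icc c b := by
  ext u
  simp only [mem_inter_iff, mem_Ioc, mem_Ici, mem_Icc]
  exact ⟨fun h => ⟨h.2, h.1.2⟩, fun h => ⟨⟨hc.1.trans_le h.1, h.2⟩, h.1⟩⟩

/-- The paper's `𝐆_λ f`; `expConv 0 f` is the primitive of `f` vanishing at `0`. -/
noncomputable def expConv (l : ℝ) (f : ℝ → ℝ) (t : ℝ) : ℝ :=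
  ∫ s in (0:ℝ)..t, exp (-(l * (t - s))) * f s

section

variable {f : ℝ → ℝ}

theorem MeasureTheory.LocallyIntegrable.intervalIntegrable (hf : LocallyIntegrable f)
    (a b : ℝ) : IntervalIntegrable f volume a b :=
  (hf.integrableOn_isCompact isCompact_uIcc).intervalIntegrable

theorem expConv_zero_left (f : ℝ → ℝ) (t : ℝ) :
    expConv 0 f t = ∫ s in (0:ℝ)..t, f s := by
  simp [expConv]

theorem expConv_eq_exp_mul (l : ℝ) (f : ℝ → ℝ) (t : ℝ) :
    expConv l f t = exp (-(l * t)) * ∫ s in (0:ℝ)..t, exp (l * s) * f s := by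
  rw [expConv, ← intervalIntegral.integral_const_mul]
  congr 1 with s
  rw [← mul_assoc, ← exp_add]
  ring_nf

theorem continuous_expConv (hf : LocallyIntegrable f) (l : ℝ) :
    Continuous (expConv l f) := by
  have hexp : LocallyIntegrable (fun s => exp (l * s) * f s) :=
    hf.continuous_mul (by fun_prop)
  simp_rw [funext (expConv_eq_exp_mul l f)]
  exact (by fun_prop : Continuous fun t => exp (-(l * t))).mul
    (intervalIntegral.continuous_primitive hexp.intervalIntegrable 0)

theorem abs_expConv_le (hf : Integrable f) {l t : ℝ} (hl : 0 ≤ l) (ht : 0 ≤ t) :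
    |expConv l f t| ≤ ∫ s, |f s| := by
  calc |expConv l f t| ≤ ∫ s in (0:ℝ)..t, |exp (-(l * (t - s))) * f s| :=
        intervalIntegral.abs_integral_le_integral_abs ht
    _ ≤ ∫ s in (0:ℝ)..t, |f s| := by
        refine intervalIntegral.integral_mono_on ht ?_ hf.abs.intervalIntegrable
          fun s hs => ?_
        · exact (hf.intervalIntegrable.continuousOn_mul (by fun_prop)).abs
        · rw [abs_mul, abs_of_pos (exp_pos _)]
          refine mul_le_of_le_one_left (abs_nonneg _) (exp_le_one_iff.2 ?_)
          nlinarith [hs.2]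
    _ ≤ ∫ s, |f s| := by
        rw [intervalIntegral.integral_of_le ht]
        exact setIntegral_le_integral hf.abs (.of_forall fun s => abs_nonneg _)

theorem intervalIntegral_integral_triangle_swap {F : ℝ → ℝ → ℝ} {t : ℝ} (ht : 0 ≤ t)
    (hF : Integrable (Function.uncurry F)
      ((volume.restrict (Ioc 0 t)).prod (volume.restrict (Ioc 0 t)))) :
    ∫ u in (0:ℝ)..t, ∫ s in (0:ℝ)..u, F u s = ∫ s in (0:ℝ)..t, ∫ u in s..t, F u s := by
  set K : ℝ × ℝ → ℝ := {p | p.2 ≤ p.1}.indicator (Function.uncurry F)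
  have hK : Integrable K ((volume.restrict (Ioc 0 t)).prod (volume.restrict (Ioc 0 t))) :=
    hF.indicator (measurableSet_le measurable_snd measurable_fst)
  have := integral_integral_swap (f := fun u s => K (u, s)) hK
  simp only [intervalIntegral.integral_of_le ht]
  convert this using 1
  · refine setIntegral_congr_fun measurableSet_Ioc fun u hu => ?_
    change _ = ∫ s in Ioc 0 t, (Iic u).indicator (F u) s
    rw [intervalIntegral.integral_of_le hu.1.le, setIntegral_indicator measurableSet_Iic,
      Ioc_inter_Iic, min_eq_right hu.2]
  · refine setIntegral_congr_fun measurableSet_Ioc fun s hs => ?_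
    change _ = ∫ u in Ioc 0 t, (Ici s).indicator (fun u => F u s) u
    rw [intervalIntegral.integral_of_le hs.2, setIntegral_indicator measurableSet_Ici,
      Ioc_inter_Ici_of_mem hs, integral_Icc_eq_integral_Ioc]

theorem intervalIntegral_mul_exp_neg_mul_sub (l s t : ℝ) :
    ∫ u in s..t, l * exp (-(l * (u - s))) = 1 - exp (-(l * (t - s))) := by
  have hderiv (u : ℝ) :
      HasDerivAt (fun u => -exp (-(l * (u - s)))) (l * exp (-(l * (u - s)))) u :=
    (((hasDerivAt_id' u).sub_const s).const_mul l).fun_neg.exp.fun_neg.congr_deriv (by ring)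
  rw [intervalIntegral.integral_eq_sub_of_hasDerivAt (fun u _ => hderiv u)
    ((by fun_prop : Continuous _).intervalIntegrable _ _)]
  simp only [sub_self, mul_zero, neg_zero, exp_zero]
  ring

theorem expConv_zero_sub_expConv (hf : LocallyIntegrable f) (l : ℝ) {t : ℝ} (ht : 0 ≤ t) :
    expConv 0 f t - expConv l f t = l * ∫ u in (0:ℝ)..t, expConv l f u := by
  have hexp : IntegrableOn (fun s => exp (l * s) * f s) (Ioc 0 t) :=
    ((hf.continuous_mul (by fun_prop)).intervalIntegrable 0 t).1
  have hF : Integrable (Function.uncurry fun u s => l * exp (-(l * (u - s))) * f s)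
      ((volume.restrict (Ioc 0 t)).prod (volume.restrict (Ioc 0 t))) := by
    refine ((by fun_prop : Continuous fun u => l * exp (-(l * u))).integrableOn_Ioc.mul_prod
      hexp).congr (.of_forall fun ⟨u, s⟩ => ?_)
    simp only [Function.uncurry_apply_pair]
    rw [mul_assoc, ← mul_assoc (exp _), ← exp_add]
    ring_nf
  calc expConv 0 f t - expConv l f t = ∫ s in (0:ℝ)..t, (1 - exp (-(l * (t - s)))) * f s := by
        rw [expConv_zero_left, expConv, ← intervalIntegral.integral_sub
          (hf.intervalIntegrable 0 t) ((hf.intervalIntegrable 0 t).continuousOn_mul (by fun_prop))]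
        congr 1 with s
        ring
    _ = ∫ s in (0:ℝ)..t, ∫ u in s..t, l * exp (-(l * (u - s))) * f s := by
        simp only [intervalIntegral.integral_mul_const, intervalIntegral_mul_exp_neg_mul_sub]
    _ = ∫ u in (0:ℝ)..t, ∫ s in (0:ℝ)..u, l * exp (-(l * (u - s))) * f s :=
        (intervalIntegral_integral_triangle_swap ht hF).symm
    _ = l * ∫ u in (0:ℝ)..t, expConv l f u := by
        simp only [mul_assoc, intervalIntegral.integral_const_mul, expConv]

theorem intervalIntegral_expConv_zero_mul_expConv_nonneg (hf : LocallyIntegrable f) {l T : ℝ}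
    (hl : 0 ≤ l) (hT : 0 ≤ T) : 0 ≤ ∫ t in (0:ℝ)..T, expConv 0 f t * expConv l f t := by
  set W := expConv l f
  have hW : Continuous W := continuous_expConv hf l
  set U : ℝ → ℝ := fun t => ∫ u in (0:ℝ)..t, W u
  have hU (t : ℝ) : HasDerivAt U (W t) t := hW.integral_hasStrictDerivAt 0 t |>.hasDerivAt
  have hUc : Continuous U := continuous_iff_continuousAt.2 fun t => (hU t).continuousAt
  have hUW : ∫ t in (0:ℝ)..T, U t * W t = U T ^ 2 / 2 := by
    rw [intervalIntegral.integral_eq_sub_of_hasDerivAt (f := fun t => U t ^ 2 / 2)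
      (fun t _ => ((hU t).pow 2).div_const 2 |>.congr_deriv (by ring))
      ((hUc.fun_mul hW).intervalIntegrable _ _)]
    simp [U]
  calc 0 ≤ (∫ t in (0:ℝ)..T, W t * W t) + l * (U T ^ 2 / 2) :=
        add_nonneg (intervalIntegral.integral_nonneg hT fun t _ => mul_self_nonneg _)
          (by positivity)
    _ = ∫ t in (0:ℝ)..T, (W t + l * U t) * W t := by
        simp only [add_mul, mul_assoc]
        rw [intervalIntegral.integral_add ((hW.fun_mul hW).intervalIntegrable _ _)
          ((continuous_const.fun_mul (hUc.fun_mul hW)).intervalIntegrable _ _),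
          intervalIntegral.integral_const_mul, hUW]
    _ = ∫ t in (0:ℝ)..T, expConv 0 f t * W t := by
        refine intervalIntegral.integral_congr fun t ht => ?_
        rw [uIcc_of_le hT] at ht
        linear_combination (-W t) * expConv_zero_sub_expConv hf l ht.1

theorem intervalIntegral_kernel_mul_eq_integral_expConv {G : ℝ → ℝ} {μ : Measure ℝ}
    [IsFiniteMeasure μ] (hμ : ∀ᵐ l ∂μ, 0 ≤ l) (hG : ∀ t > (0:ℝ), G t = ∫ l, exp (-(l * t)) ∂μ)
    (hf : LocallyIntegrable f) {t : ℝ} (ht : 0 ≤ t) :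
    ∫ s in (0:ℝ)..t, G (t - s) * f s = ∫ l, expConv l f t ∂μ := by
  have hfi : IntegrableOn f (Ioo 0 t) := (hf.integrableOn_isCompact isCompact_Icc).mono_set
    Ioo_subset_Icc_self
  have hint : Integrable (Function.uncurry fun s l => exp (-(l * (t - s))) * f s)
      ((volume.restrict (Ioo 0 t)).prod μ) := by
    refine (hfi.norm.mul_prod (integrable_const (1:ℝ))).mono'
      ((by fun_prop : Continuous fun p : ℝ × ℝ => exp (-(p.2 * (t - p.1))))
        |>.aestronglyMeasurable.mul hfi.aestronglyMeasurable.comp_fst) ?_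
    filter_upwards [Measure.quasiMeasurePreserving_fst.ae (ae_restrict_mem measurableSet_Ioo),
      Measure.quasiMeasurePreserving_snd.ae hμ] with p hs hl
    simp only [Function.uncurry, norm_mul, norm_of_nonneg (exp_pos _).le, mul_one]
    refine mul_le_of_le_one_left (norm_nonneg _) (exp_le_one_iff.2 ?_)
    nlinarith [hs.2]
  rw [intervalIntegral.integral_of_le ht, integral_Ioc_eq_integral_Ioo]
  calc ∫ s in Ioo 0 t, G (t - s) * f s
      = ∫ s in Ioo 0 t, ∫ l, exp (-(l * (t - s))) * f s ∂μ :=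
        setIntegral_congr_fun measurableSet_Ioo fun s hs => by
          rw [hG _ (sub_pos.2 hs.2), integral_mul_const]
    _ = ∫ l, (∫ s in Ioo 0 t, exp (-(l * (t - s))) * f s) ∂μ := integral_integral_swap hint
    _ = ∫ l, expConv l f t ∂μ := by
        simp only [expConv, intervalIntegral.integral_of_le ht, integral_Ioc_eq_integral_Ioo]

theorem aestronglyMeasurable_expConv_uncurry (hf : AEStronglyMeasurable f) {ρ μ : Measure ℝ}
    [SFinite ρ] [SFinite μ] :
    AEStronglyMeasurable (fun p : ℝ × ℝ => expConv p.2 f p.1) (ρ.prod μ) := by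
  have hIoc {a b : ℝ × ℝ → ℝ} (ha : Measurable a) (hb : Measurable b) :
      AEStronglyMeasurable
        (fun p => ∫ s in Ioc (a p) (b p), exp (-(p.2 * (p.1 - s))) * f s) (ρ.prod μ) := by
    simp_rw [← integral_indicator measurableSet_Ioc]
    refine AEStronglyMeasurable.integral_prod_right' (f := fun q : (ℝ × ℝ) × ℝ =>
      {q : (ℝ × ℝ) × ℝ | q.2 ∈ Ioc (a q.1) (b q.1)}.indicator
        (fun q => exp (-(q.1.2 * (q.1.1 - q.2))) * f q.2) q) ?_
    refine AEStronglyMeasurable.indicator ?_ ?_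
    · exact (by fun_prop : Continuous fun q : (ℝ × ℝ) × ℝ => exp (-(q.1.2 * (q.1.1 - q.2))))
        |>.aestronglyMeasurable.mul hf.comp_snd
    · exact (measurableSet_lt (ha.comp measurable_fst) measurable_snd).inter
        (measurableSet_le measurable_snd (hb.comp measurable_fst))
  exact (hIoc measurable_const measurable_fst).sub (hIoc measurable_fst measurable_const)

theorem intervalIntegral_expConv_zero_mul_integral_expConv_nonneg (hf : Integrable f)
    {μ : Measure ℝ} [IsFiniteMeasure μ] (hμ : ∀ᵐ l ∂μ, 0 ≤ l) {T : ℝ} (hT : 0 ≤ T) :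
    0 ≤ ∫ t in (0:ℝ)..T, expConv 0 f t * ∫ l, expConv l f t ∂μ := by
  have hint : Integrable (Function.uncurry fun t l => expConv 0 f t * expConv l f t)
      ((volume.restrict (Ioc 0 T)).prod μ) := by
    refine .of_bound (((continuous_expConv hf.locallyIntegrable 0).comp continuous_fst
      ).aestronglyMeasurable.mul (aestronglyMeasurable_expConv_uncurry hf.aestronglyMeasurable))
      ((∫ s, |f s|) * ∫ s, |f s|) ?_
    filter_upwards [Measure.quasiMeasurePreserving_fst.ae (ae_restrict_mem measurableSet_Ioc),
      Measure.quasiMeasurePreserving_snd.ae hμ] with p ht hl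
    rw [Function.uncurry, norm_mul]
    exact mul_le_mul (abs_expConv_le hf le_rfl ht.1.le) (abs_expConv_le hf hl ht.1.le)
      (norm_nonneg _) (integral_nonneg fun s => abs_nonneg _)
  rw [intervalIntegral.integral_of_le hT]
  calc 0 ≤ ∫ l, (∫ t in Ioc 0 T, expConv 0 f t * expConv l f t) ∂μ := by
        refine integral_nonneg_of_ae ?_
        filter_upwards [hμ] with l hl
        rw [← intervalIntegral.integral_of_le hT]
        exact intervalIntegral_expConv_zero_mul_expConv_nonneg hf.locallyIntegrable hl hT
    _ = ∫ t in Ioc 0 T, ∫ l, expConv 0 f t * expConv l f t ∂μ :=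
        (integral_integral_swap hint).symm
    _ = ∫ t in Ioc 0 T, expConv 0 f t * ∫ l, expConv l f t ∂μ := by
        simp only [integral_const_mul]

end

theorem stmt6_general (T kappa : ℝ) (hT : 0 < T) (hkappa : 0 ≤ kappa)
    (G : ℝ → ℝ) (μ : Measure ℝ) [IsFiniteMeasure μ]
    (hμ : μ (Set.Iio 0) = 0)
    -- Bernstein representation of the completely monotone kernel G
    (hG : ∀ t > (0:ℝ), G t = ∫ l, Real.exp (-(l * t)) ∂μ)
    (v : ℝ → ℝ)
    (hvInt : IntegrableOn v (Set.Icc 0 T)) :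
    0 ≤ ∫ t in (0:ℝ)..T,
        (kappa * ∫ s in (0:ℝ)..t, v s) * (∫ s in (0:ℝ)..t, G (t - s) * v s) := by
  set w := (Icc 0 T).indicator v
  have hw : Integrable w := (integrable_indicator_iff measurableSet_Icc).2 hvInt
  have hμ_nonneg : ∀ᵐ l ∂μ, 0 ≤ l := by simpa [ae_iff, Iio] using hμ
  have hvw {t : ℝ} (ht : t ∈ Icc 0 T) : EqOn v w (uIcc 0 t) := fun s hs =>
    (indicator_of_mem (Icc_subset_Icc_right ht.2 (uIcc_of_le ht.1 ▸ hs)) v).symm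
  calc 0 ≤ kappa * ∫ t in (0:ℝ)..T, expConv 0 w t * ∫ l, expConv l w t ∂μ :=
        mul_nonneg hkappa
          (intervalIntegral_expConv_zero_mul_integral_expConv_nonneg hw hμ_nonneg hT.le)
    _ = _ := by
        rw [← intervalIntegral.integral_const_mul]
        refine intervalIntegral.integral_congr fun t ht => ?_
        rw [uIcc_of_le hT.le] at ht
        rw [intervalIntegral.integral_congr (hvw ht), intervalIntegral.integral_congr
          fun s hs => congrArg (G (t - s) * ·) (hvw ht hs), expConv_zero_left,
          intervalIntegral_kernel_mul_eq_integral_expConv hμ_nonneg hG hw.locallyIntegrable ht.1,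
          mul_assoc]

theorem stmt6 (T kappa : ℝ) (hT : 0 < T) (hkappa : 0 ≤ kappa)
    (G : ℝ → ℝ) (μ : Measure ℝ) [IsFiniteMeasure μ]
    (hμ : μ (Set.Iio 0) = 0)
    -- Bernstein representation of the completely monotone kernel G
    (hG : ∀ t > (0:ℝ), G t = ∫ l, Real.exp (-(l * t)) ∂μ)
    (hGL2 : IntegrableOn (fun t => (G t) ^ 2) (Set.Icc 0 T))
    (v : ℝ → ℝ) (hv : Measurable v)
    (hvInt : IntegrableOn v (Set.Icc 0 T))
    (hvL2 : IntegrableOn (fun t => (v t) ^ 2) (Set.Icc 0 T)) :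
    0 ≤ ∫ t in (0:ℝ)..T,
        (kappa * ∫ s in (0:ℝ)..t, v s) * (∫ s in (0:ℝ)..t, G (t - s) * v s) :=
  stmt6_general T kappa hT hkappa G μ hμ hG v hvInt
end

section
/- Let H be a Hilbert space, 𝐁 : H → H weakly sequentially continuous, and suppose 𝐈 + 𝐁 is a bijection with Lipschitz inverse (so (𝐈+𝐁)^{-1} maps bounded sets to bounded sets and (𝐈+𝐁)^{-1}(0) = 0 when 𝐁(0)=0). Then (𝐈 + 𝐁)^{-1} is weakly sequentially continuous: if yₙ ⇀ y, then (𝐈+𝐁)^{-1}yₙ ⇀ (𝐈+𝐁)^{-1}y. -/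
/-!
A weakly convergent sequence is bounded (uniform boundedness), so its image under the Lipschitz
map `S = (I + B)⁻¹` is bounded, and by weak sequential compactness of bounded sets in a Hilbert
space every subsequence of `S ∘ y` has a weakly convergent subsequence. Passing to the limit in
`S yₙ + B (S yₙ) = yₙ` with the weak continuity of `B` shows that any such limit `l'` satisfies
`l' + B l' = l`, i.e. `l' = S l`; a sequence all of whose subsequences have subsequences
converging to the same point converges to it.
-/

open Filter Topology
open scoped RealInnerProductSpace

/-- Weak convergence of a sequence in a real inner product space. -/
def WeakConv {H : Type*} [NormedAddCommGroup H] [InnerProductSpace ℝ H]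
    (x : ℕ → H) (l : H) : Prop :=
  ∀ w : H, Tendsto (fun n => ⟪x n, w⟫) atTop (nhds ⟪l, w⟫)

open Bornology Set

section

variable {H : Type*} [NormedAddCommGroup H] [InnerProductSpace ℝ H]

namespace WeakConv

variable {x y : ℕ → H} {l l' : H}

theorem comp_tendsto (hx : WeakConv x l) {φ : ℕ → ℕ} (hφ : Tendsto φ atTop atTop) :
    WeakConv (x ∘ φ) l :=
  fun w => (hx w).comp hφ

theorem add (hx : WeakConv x l) (hy : WeakConv y l') : WeakConv (x + y) (l + l') := fun w => by
  simpa only [Pi.add_apply, inner_add_left] using (hx w).add (hy w)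

theorem unique (h : WeakConv x l) (h' : WeakConv x l') : l = l' :=
  ext_inner_right ℝ fun w => tendsto_nhds_unique (h w) (h' w)

theorem isBounded_range [CompleteSpace H] (hx : WeakConv x l) : IsBounded (range x) := by
  have hpointwise (w : H) : ∃ C, ∀ n, ‖innerSL ℝ (x n) w‖ ≤ C := by
    obtain ⟨C, hC⟩ := (hx w).norm.bddAbove_range
    exact ⟨C, fun n => hC (mem_range_self n)⟩
  obtain ⟨C, hC⟩ := banach_steinhaus hpointwise
  refine isBounded_iff_forall_norm_le.2 ⟨C, ?_⟩
  rintro - ⟨n, rfl⟩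
  simpa only [innerSL_apply_norm] using hC n

end WeakConv

theorem exists_weakConv_subseq_of_isBounded [CompleteSpace H] {x : ℕ → H}
    (hx : IsBounded (range x)) : ∃ φ : ℕ → ℕ, StrictMono φ ∧ ∃ l, WeakConv (x ∘ φ) l := by
  obtain ⟨C, hC⟩ := hx.exists_norm_le
  set K := (Submodule.span ℝ (range x)).topologicalClosure
  have hxK (n : ℕ) : x n ∈ K :=
    Submodule.le_topologicalClosure _ (Submodule.subset_span (mem_range_self n))
  have : CompleteSpace K := (Submodule.isClosed_topologicalClosure _).completeSpace_coe
  -- sequential Banach–Alaoglu needs a separable space, hence the restriction to `K`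
  have : TopologicalSpace.SeparableSpace K :=
    (countable_range x).isSeparable.span.closure.separableSpace
  let f (n : ℕ) : WeakDual ℝ K := InnerProductSpace.toDual ℝ K ⟨x n, hxK n⟩
  have hf_apply (n : ℕ) (v : H) : f n (K.orthogonalProjectionOnto v) = ⟪x n, v⟫ :=
    Submodule.inner_orthogonalProjectionOnto_eq_of_mem_left (K := K) ⟨x n, hxK n⟩ v
  have hf_mem (n : ℕ) : f n ∈ WeakDual.toStrongDual ⁻¹' Metric.closedBall 0 C := by
    have h : ‖InnerProductSpace.toDual ℝ K ⟨x n, hxK n⟩‖ ≤ C := by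
      rw [LinearIsometryEquiv.norm_map]
      exact hC _ (mem_range_self n)
    exact mem_closedBall_zero_iff.2 h
  obtain ⟨a, -, φ, hφ, ha⟩ := WeakDual.isSeqCompact_closedBall ℝ K 0 C hf_mem
  refine ⟨φ, hφ, (InnerProductSpace.toDual ℝ K).symm (WeakDual.toStrongDual a), fun w => ?_⟩
  have := ((WeakDual.eval_continuous (K.orthogonalProjectionOnto w)).tendsto a).comp ha
  convert this using 2 with n
  · exact (hf_apply (φ n) w).symm
  · rw [← Submodule.inner_orthogonalProjectionOnto_eq_of_mem_left,
      InnerProductSpace.toDual_symm_apply]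
    rfl

theorem weakConv_of_isBounded_of_subseq_limit_eq [CompleteSpace H] {x : ℕ → H} {l : H}
    (hx : IsBounded (range x))
    (hlim : ∀ φ : ℕ → ℕ, Tendsto φ atTop atTop → ∀ l', WeakConv (x ∘ φ) l' → l' = l) :
    WeakConv x l := by
  intro w
  refine tendsto_of_subseq_tendsto fun ns hns => ?_
  obtain ⟨φ, hφ, l', hl'⟩ :=
    exists_weakConv_subseq_of_isBounded (hx.subset (range_comp_subset_range ns x))
  obtain rfl := hlim (ns ∘ φ) (hns.comp hφ.tendsto_atTop) l' hl'
  exact ⟨φ, hl' w⟩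

end

theorem stmt10_general {H : Type*} [NormedAddCommGroup H] [InnerProductSpace ℝ H]
    [CompleteSpace H]
    (B S : H → H) (KS : NNReal)
    -- B is weakly sequentially continuous
    (hB : ∀ (x : ℕ → H) (l : H), WeakConv x l → WeakConv (fun n => B (x n)) (B l))
    -- 𝐈 + 𝐁 is a bijection with Lipschitz inverse S
    (hS : LipschitzWith KS S)
    (hleft : ∀ u : H, S (u + B u) = u) (hright : ∀ u : H, S u + B (S u) = u) :
    -- (𝐈 + 𝐁)⁻¹ = S is weakly sequentially continuous
    ∀ (y : ℕ → H) (l : H), WeakConv y l → WeakConv (fun n => S (y n)) (S l) := by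
  intro y l hy
  have hbdd : IsBounded (range (S ∘ y)) := by
    rw [range_comp]
    exact hS.isBounded_image hy.isBounded_range
  refine weakConv_of_isBounded_of_subseq_limit_eq hbdd fun φ hφ l' hl' => ?_
  have hfixed : l' + B l' = l := by
    refine (hl'.add (hB _ _ hl')).unique ?_
    convert hy.comp_tendsto hφ using 1
    exact funext fun n => hright (y (φ n))
  rw [← hfixed, hleft]

theorem stmt10 {H : Type*} [NormedAddCommGroup H] [InnerProductSpace ℝ H]
    [CompleteSpace H]
    (B S : H → H) (KS : NNReal)
    -- B is weakly sequentially continuous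
    (hB : ∀ (x : ℕ → H) (l : H), WeakConv x l → WeakConv (fun n => B (x n)) (B l))
    -- 𝐈 + 𝐁 is a bijection with Lipschitz inverse S
    (hS : LipschitzWith KS S)
    (hleft : ∀ u : H, S (u + B u) = u) (hright : ∀ u : H, S u + B (S u) = u)
    (hB0 : B 0 = 0) :
    -- (𝐈 + 𝐁)⁻¹ = S is weakly sequentially continuous
    ∀ (y : ℕ → H) (l : H), WeakConv y l → WeakConv (fun n => S (y n)) (S l) :=
  stmt10_general B S KS hB hS hleft hright
end
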